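/- arXiv:1603.00861 — 7 statements merged into one kernel-verified Lean document; each statement's English description precedes it below -/
import Mathlib

section
/- Let d ∈ (0,1), let s ≥ 1 be an integer, and let a > d be a real number (so that a − d > 0). Then the (convergent) improper integral ∫₀¹ θ^(−1−d) [(1−θ)^(a−1) − (1−θ)^(a+s−1)] dθ equals (Γ(1−d)/d)·[Γ(a+s)/Γ(a+s−d) − Γ(a)/Γ(a−d)]. In particular, taking a = α + d + (k−1)s, the size-biased rate for the beta process with the negative binomial likelihood with s failures equals (γ/d)·(Γ(α+1)/Γ(α+d))·[Γ(α+d+ks)/Γ(α+ks) − Γ(α+d+(k−1)s)/Γ(α+(k−1)s)]. -/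
/-!
Writing `t = 1 - θ`, the difference `t ^ (a - 1) - t ^ (a + s - 1)` telescopes into
`θ * ∑_{j < s} t ^ (a + j - 1)`, so the integrand is a finite sum of Beta kernels
`θ ^ (-d) * (1 - θ) ^ (a + j - 1)`, with integrals `B(1 - d, a + j)`. By `Γ(x + 1) = x Γ(x)`,
`B(1 - d, a + j) = Γ(1 - d) / d * (g (j + 1) - g j)` where `g n = Γ(a + n) / Γ(a + n - d)`,
so the sum telescopes once more. The size-biased rate is the case `a = α + d + (k - 1) s`.
-/

open Real MeasureTheory

lemma ofReal_rpow_mul_one_sub_rpow {x : ℝ} (h0 : 0 ≤ x) (h1 : x ≤ 1) (u v : ℝ) :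
    ((x ^ (u - 1) * (1 - x) ^ (v - 1) : ℝ) : ℂ)
      = (x : ℂ) ^ ((u : ℂ) - 1) * (1 - (x : ℂ)) ^ ((v : ℂ) - 1) := by
  rw [Complex.ofReal_mul, Complex.ofReal_cpow h0, Complex.ofReal_cpow (sub_nonneg.2 h1)]
  push_cast
  rfl

lemma betaIntegral_ofReal (u v : ℝ) :
    Complex.betaIntegral u v = ((∫ x in (0 : ℝ)..1, x ^ (u - 1) * (1 - x) ^ (v - 1) : ℝ) : ℂ) := by
  rw [Complex.betaIntegral, ← intervalIntegral.integral_ofReal]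
  refine intervalIntegral.integral_congr fun x hx => ?_
  rw [Set.uIcc_of_le zero_le_one] at hx
  exact (ofReal_rpow_mul_one_sub_rpow hx.1 hx.2 u v).symm

lemma intervalIntegrable_rpow_mul_one_sub_rpow {u v : ℝ} (hu : 0 < u) (hv : 0 < v) :
    IntervalIntegrable (fun x : ℝ => x ^ (u - 1) * (1 - x) ^ (v - 1)) volume 0 1 := by
  have h := Complex.betaIntegral_convergent (u := u) (v := v) (by simpa) (by simpa)
  have hre : IntervalIntegrable
      (fun x : ℝ => ((x : ℂ) ^ ((u : ℂ) - 1) * (1 - (x : ℂ)) ^ ((v : ℂ) - 1)).re) volume 0 1 :=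
    ⟨h.1.re, h.2.re⟩
  refine hre.congr ?_
  rw [Set.uIoc_of_le zero_le_one]
  intro x hx
  dsimp only
  rw [← ofReal_rpow_mul_one_sub_rpow hx.1.le hx.2 u v, Complex.ofReal_re]

lemma integral_rpow_mul_one_sub_rpow {u v : ℝ} (hu : 0 < u) (hv : 0 < v) :
    ∫ x in (0 : ℝ)..1, x ^ (u - 1) * (1 - x) ^ (v - 1) = Gamma u * Gamma v / Gamma (u + v) := by
  have h := Complex.betaIntegral_eq_Gamma_mul_div u v (by simpa) (by simpa)
  rw [betaIntegral_ofReal, ← Complex.ofReal_add, Complex.Gamma_ofReal, Complex.Gamma_ofReal,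
    Complex.Gamma_ofReal] at h
  exact_mod_cast h

lemma rpow_neg_one_sub_mul_one_sub_rpow_sub_eq_sum {θ : ℝ} (h0 : 0 < θ) (h1 : θ < 1)
    (d a : ℝ) (s : ℕ) :
    θ ^ (-1 - d) * ((1 - θ) ^ (a - 1) - (1 - θ) ^ (a + s - 1))
      = ∑ j ∈ Finset.range s, θ ^ (1 - d - 1) * (1 - θ) ^ (a + j - 1) := by
  have hθ : θ ^ (1 - d - 1) = θ ^ (-1 - d) * θ := by
    rw [← rpow_add_one h0.ne']; ring_nf
  have step (j : ℕ) :
      (1 - θ) ^ (a + j - 1) - (1 - θ) ^ (a + (j + 1 : ℕ) - 1) = θ * (1 - θ) ^ (a + j - 1) := by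
    rw [show a + ((j + 1 : ℕ) : ℝ) - 1 = a + j - 1 + 1 by push_cast; ring,
      rpow_add_one (sub_pos.2 h1).ne']
    ring
  have telescope := Finset.sum_range_sub' (fun j : ℕ => (1 - θ) ^ (a + j - 1)) s
  simp only [Nat.cast_zero, add_zero] at telescope
  rw [← telescope, Finset.mul_sum]
  refine Finset.sum_congr rfl fun j _ => ?_
  rw [step, hθ]
  ring

lemma Gamma_mul_Gamma_div_Gamma_eq_sub {d x : ℝ} (hd : d ≠ 0) (hx : x ≠ 0) (hxd : x - d ≠ 0) :
    Gamma (1 - d) * Gamma x / Gamma (1 - d + x)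
      = Gamma (1 - d) / d * (Gamma (x + 1) / Gamma (x + 1 - d) - Gamma x / Gamma (x - d)) := by
  rw [show 1 - d + x = x - d + 1 by ring, show x + 1 - d = x - d + 1 by ring,
    Gamma_add_one hx, Gamma_add_one hxd]
  rcases eq_or_ne (Gamma (x - d)) 0 with h | h
  · simp [h]
  · field_simp
    ring

lemma integral_rpow_neg_one_sub_mul_one_sub_rpow_sub {d : ℝ} (hd0 : 0 < d) (hd1 : d < 1)
    {a : ℝ} (ha : d < a) (s : ℕ) :
    ∫ θ in (0 : ℝ)..1, θ ^ (-1 - d) * ((1 - θ) ^ (a - 1) - (1 - θ) ^ (a + s - 1))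
      = Gamma (1 - d) / d * (Gamma (a + s) / Gamma (a + s - d) - Gamma a / Gamma (a - d)) := by
  set g : ℕ → ℝ := fun n => Gamma (a + n) / Gamma (a + n - d)
  have hterm (j : ℕ) : ∫ θ in (0 : ℝ)..1, θ ^ (1 - d - 1) * (1 - θ) ^ (a + j - 1)
      = Gamma (1 - d) / d * (g (j + 1) - g j) := by
    have hj : (0 : ℝ) ≤ j := j.cast_nonneg
    rw [integral_rpow_mul_one_sub_rpow (by linarith) (by linarith),
      Gamma_mul_Gamma_div_Gamma_eq_sub hd0.ne' (by linarith) (by linarith)]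
    simp only [g, Nat.cast_add, Nat.cast_one, add_assoc, add_sub_right_comm]
  rw [intervalIntegral.integral_congr_Ioo_of_le zero_le_one
      fun θ hθ => rpow_neg_one_sub_mul_one_sub_rpow_sub_eq_sum hθ.1 hθ.2 d a s,
    intervalIntegral.integral_finsetSum
    fun j _ => intervalIntegrable_rpow_mul_one_sub_rpow (by linarith)
      (add_pos_of_pos_of_nonneg (hd0.trans ha) j.cast_nonneg)]
  simp only [hterm]
  rw [← Finset.mul_sum, Finset.sum_range_sub]
  simp [g]

theorem beta_process_size_biased_rate_negBinom_general
    (d : ℝ) (hd0 : 0 < d) (hd1 : d < 1) (s : ℕ) :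
    (∀ a : ℝ, d < a →
      ∫ θ in (0:ℝ)..1, θ ^ (-1 - d) * ((1 - θ) ^ (a - 1) - (1 - θ) ^ (a + (s : ℝ) - 1))
        = Real.Gamma (1 - d) / d *
            (Real.Gamma (a + (s : ℝ)) / Real.Gamma (a + (s : ℝ) - d)
              - Real.Gamma a / Real.Gamma (a - d))) ∧
    (∀ γ α : ℝ, 0 < γ → ∀ k : ℕ, 1 ≤ k → d < α + d + ((k : ℝ) - 1) * (s : ℝ) →
      γ * (Real.Gamma (α + 1) / (Real.Gamma (1 - d) * Real.Gamma (α + d))) *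
          ∫ θ in (0:ℝ)..1, θ ^ (-1 - d) *
            ((1 - θ) ^ (α + d + ((k : ℝ) - 1) * (s : ℝ) - 1)
              - (1 - θ) ^ (α + d + (k : ℝ) * (s : ℝ) - 1))
        = γ / d * (Real.Gamma (α + 1) / Real.Gamma (α + d)) *
            (Real.Gamma (α + d + (k : ℝ) * (s : ℝ)) / Real.Gamma (α + (k : ℝ) * (s : ℝ))
              - Real.Gamma (α + d + ((k : ℝ) - 1) * (s : ℝ)) /
                  Real.Gamma (α + ((k : ℝ) - 1) * (s : ℝ)))) := by
  refine ⟨fun a ha => integral_rpow_neg_one_sub_mul_one_sub_rpow_sub hd0 hd1 ha s,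
    fun γ α _ k _ ha => ?_⟩
  have hshift : α + d + (k : ℝ) * s - 1 = α + d + ((k : ℝ) - 1) * s + s - 1 := by ring
  rw [hshift, integral_rpow_neg_one_sub_mul_one_sub_rpow_sub hd0 hd1 ha s]
  have hc : Gamma (1 - d) ≠ 0 := (Gamma_pos_of_pos (by linarith)).ne'
  ring_nf
  field_simp

/-- For `d ∈ (0,1)`, an integer `s ≥ 1` and `a > d`, the improper integral
`∫₀¹ θ^(-1-d) [(1-θ)^(a-1) - (1-θ)^(a+s-1)] dθ` equals
`(Γ(1-d)/d)·[Γ(a+s)/Γ(a+s-d) - Γ(a)/Γ(a-d)]`.  In particular, with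
`a = α + d + (k-1)s`, the size-biased rate for the beta process with the
negative binomial likelihood with `s` failures equals
`(γ/d)·(Γ(α+1)/Γ(α+d))·[Γ(α+d+ks)/Γ(α+ks) - Γ(α+d+(k-1)s)/Γ(α+(k-1)s)]`. -/
theorem beta_process_size_biased_rate_negBinom
    (d : ℝ) (hd0 : 0 < d) (hd1 : d < 1) (s : ℕ) (hs : 1 ≤ s) :
    (∀ a : ℝ, d < a →
      ∫ θ in (0:ℝ)..1, θ ^ (-1 - d) * ((1 - θ) ^ (a - 1) - (1 - θ) ^ (a + (s : ℝ) - 1))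
        = Real.Gamma (1 - d) / d *
            (Real.Gamma (a + (s : ℝ)) / Real.Gamma (a + (s : ℝ) - d)
              - Real.Gamma a / Real.Gamma (a - d))) ∧
    (∀ γ α : ℝ, 0 < γ → ∀ k : ℕ, 1 ≤ k → d < α + d + ((k : ℝ) - 1) * (s : ℝ) →
      γ * (Real.Gamma (α + 1) / (Real.Gamma (1 - d) * Real.Gamma (α + d))) *
          ∫ θ in (0:ℝ)..1, θ ^ (-1 - d) *
            ((1 - θ) ^ (α + d + ((k : ℝ) - 1) * (s : ℝ) - 1)
              - (1 - θ) ^ (α + d + (k : ℝ) * (s : ℝ) - 1))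
        = γ / d * (Real.Gamma (α + 1) / Real.Gamma (α + d)) *
            (Real.Gamma (α + d + (k : ℝ) * (s : ℝ)) / Real.Gamma (α + (k : ℝ) * (s : ℝ))
              - Real.Gamma (α + d + ((k : ℝ) - 1) * (s : ℝ)) /
                  Real.Gamma (α + ((k : ℝ) - 1) * (s : ℝ)))) :=
  beta_process_size_biased_rate_negBinom_general d hd0 hd1 s
end

section
/- Let b > 0 be a real number and let s ≥ 1 be an integer. Then ∫₀¹ θ^(−1) (1−θ)^(b−1) (1 − (1−θ)^s) dθ = ψ(b+s) − ψ(b), where ψ is the digamma function. (This is the d = 0 size-biased rate computation for the beta process with the negative binomial likelihood, with b = α + (k−1)s.) -/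
open Real MeasureTheory

/-- The digamma function `ψ(x) = d/dx log Γ(x)`. -/
noncomputable def digamma (x : ℝ) : ℝ :=
  deriv (fun t => Real.log (Real.Gamma t)) x

lemma digamma_add_one {x : ℝ} (hx : 0 < x) :
    digamma (x + 1) = digamma x + 1 / x := by
  have hdΓ : DifferentiableAt ℝ (fun t => Real.log (Real.Gamma t)) x := by
    apply DifferentiableAt.log
    · refine Real.differentiableAt_Gamma fun m => ?_
      have : (0:ℝ) ≤ m := Nat.cast_nonneg m
      intro hc; rw [hc] at hx; linarith
    · exact (Real.Gamma_pos_of_pos hx).ne'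
  have h2 : HasDerivAt (fun t => Real.log t + Real.log (Real.Gamma t))
      (x⁻¹ + digamma x) x :=
    (Real.hasDerivAt_log hx.ne').add hdΓ.hasDerivAt
  have h2' : HasDerivAt (fun t => Real.log t + Real.log (Real.Gamma t))
      (x⁻¹ + digamma x) ((x + 1) - 1) := by
    simpa using h2
  have h3 := h2'.comp_sub_const (x + 1) 1
  have h4 : HasDerivAt (fun t => Real.log (Real.Gamma t)) (x⁻¹ + digamma x) (x + 1) := by
    apply h3.congr_of_eventuallyEq
    filter_upwards [eventually_gt_nhds (show (1:ℝ) < x + 1 by linarith)] with t ht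
    have ht1 : 0 < t - 1 := by linarith
    rw [show t = (t - 1) + 1 by ring, Real.Gamma_add_one ht1.ne',
      Real.log_mul ht1.ne' (Real.Gamma_pos_of_pos ht1).ne']
    ring_nf
  rw [digamma, h4.deriv, one_div, add_comm]

lemma digamma_add_nat (b : ℝ) (hb : 0 < b) (s : ℕ) :
    digamma (b + s) = digamma b + ∑ j ∈ Finset.range s, 1 / (b + j) := by
  induction s with
  | zero => simp
  | succ n ih =>
    have hbn : 0 < b + n := by positivity
    have : b + (n + 1 : ℕ) = (b + n) + 1 := by push_cast; ring
    rw [this, digamma_add_one hbn, ih, Finset.sum_range_succ]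
    ring

/-- For `b > 0` and an integer `s ≥ 1`,
`∫₀¹ θ⁻¹ (1-θ)^(b-1) (1 - (1-θ)^s) dθ = ψ(b+s) - ψ(b)`.
This is the `d = 0` size-biased rate computation for the beta process with the
negative binomial likelihood, with `b = α + (k-1)s`. -/
theorem beta_process_size_biased_rate_negBinom_d_zero
    (b : ℝ) (hb : 0 < b) (s : ℕ) (hs : 1 ≤ s) :
    ∫ θ in (0:ℝ)..1, θ⁻¹ * (1 - θ) ^ (b - 1) * (1 - (1 - θ) ^ (s : ℝ))
      = digamma (b + (s : ℝ)) - digamma b := by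
  have key : ∫ θ in (0:ℝ)..1, θ⁻¹ * (1 - θ) ^ (b - 1) * (1 - (1 - θ) ^ (s : ℝ))
      = ∫ θ in (0:ℝ)..1, ∑ j ∈ Finset.range s, (1 - θ) ^ (b - 1 + j) := by
    apply intervalIntegral.integral_congr_ae
    have h1 : ∀ᵐ x : ℝ, x ≠ 1 := by
      rw [MeasureTheory.ae_iff]
      simpa using Real.volume_singleton (x := 1)
    filter_upwards [h1] with x hx1 hx
    rw [Set.uIoc_of_le (by norm_num : (0:ℝ) ≤ 1)] at hx
    have hx0 : 0 < x := hx.1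
    have hx1' : 0 < 1 - x := by
      cases lt_or_eq_of_le hx.2 with
      | inl h => linarith
      | inr h => exact absurd h hx1
    have hgeom : (1 - (1 - x) ^ s) = x * ∑ j ∈ Finset.range s, (1 - x) ^ j := by
      have := geom_sum_mul (1 - x) s
      nlinarith [this]
    have hsum : ∑ j ∈ Finset.range s, (1 - x) ^ (b - 1 + (j:ℝ))
        = (1 - x) ^ (b - 1) * ∑ j ∈ Finset.range s, (1 - x) ^ j := by
      rw [Finset.mul_sum]
      refine Finset.sum_congr rfl fun j _ => ?_
      rw [Real.rpow_add hx1', Real.rpow_natCast]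
    rw [Real.rpow_natCast, hgeom, hsum]
    field_simp
  rw [key]
  have hint : ∀ j ∈ Finset.range s, IntervalIntegrable
      (fun θ : ℝ => (1 - θ) ^ (b - 1 + (j:ℝ))) volume 0 1 := by
    intro j _
    have hj : (0:ℝ) ≤ j := Nat.cast_nonneg j
    have : IntervalIntegrable (fun u : ℝ => u ^ (b - 1 + (j:ℝ))) volume 0 1 :=
      intervalIntegral.intervalIntegrable_rpow' (by linarith)
    simpa using (this.comp_sub_left 1).symm
  rw [intervalIntegral.integral_finset_sum hint]
  have hterm : ∀ j ∈ Finset.range s,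
      (∫ θ in (0:ℝ)..1, (1 - θ) ^ (b - 1 + (j:ℝ))) = 1 / (b + j) := by
    intro j _
    have hj : (0:ℝ) ≤ j := Nat.cast_nonneg j
    have h1 : (∫ θ in (0:ℝ)..1, (1 - θ) ^ (b - 1 + (j:ℝ)))
        = ∫ u in (0:ℝ)..1, u ^ (b - 1 + (j:ℝ)) := by
      have := intervalIntegral.integral_comp_sub_left
        (a := (0:ℝ)) (b := 1) (fun u : ℝ => u ^ (b - 1 + (j:ℝ))) 1
      simpa using this
    have hbj : 0 < b + j := by positivity
    rw [h1, integral_rpow (Or.inl (by linarith))]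
    rw [show b - 1 + (j:ℝ) + 1 = b + j by ring]
    rw [Real.one_rpow, Real.zero_rpow hbj.ne']
    ring
  rw [Finset.sum_congr rfl hterm, digamma_add_nat b hb s]
  ring
end

section
/- Fix real numbers α and d with 0 < d < 1, and fix integers s ≥ 1 and N ≥ 1. Then, as K → ∞ along the natural numbers, Γ(α+d+(K+N)s)/Γ(α+(K+N)s) − Γ(α+d+Ks)/Γ(α+Ks) is asymptotically equivalent to d·N·s^d·K^(d−1); that is, the ratio of the two expressions converges to 1 as K → ∞. -/
open Real Filter

/-!
Write `r(x) = Γ(x + d) / Γ(x)`. The functional equation gives `r(x + 1) - r(x) = d r(x) / x`, so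
the difference in the statement telescopes into the `N s` terms `d r(y) / y` with
`y = α + K s + j`, `j < N s`. Log-convexity of `Γ` (Wendel's inequalities) squeezes `r(x) / x ^ d`
to `1`, so each term is asymptotic to `d (K s) ^ (d - 1)` and their sum to `d N s ^ d K ^ (d - 1)`.
-/

namespace Real

variable {x d : ℝ}

theorem Gamma_add_le_Gamma_mul_rpow (hx : 0 < x) (hd0 : 0 < d) (hd1 : d < 1) :
    Gamma (x + d) ≤ Gamma x * x ^ d := by
  have hconv := Gamma_mul_add_mul_le_rpow_Gamma_mul_rpow_Gamma (s := x) (t := x + 1)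
    (a := 1 - d) (b := d) hx (by linarith) (by linarith) hd0 (by ring)
  have hG := Gamma_pos_of_pos hx
  rw [show (1 - d) * x + d * (x + 1) = x + d by ring, Gamma_add_one hx.ne',
    mul_rpow hx.le hG.le] at hconv
  calc Gamma (x + d) ≤ Gamma x ^ (1 - d) * (x ^ d * Gamma x ^ d) := hconv
    _ = Gamma x ^ (1 - d + d) * x ^ d := by rw [rpow_add hG]; ring
    _ = Gamma x * x ^ d := by norm_num

theorem mul_Gamma_le_Gamma_add_mul_rpow (hx : 0 < x) (hd0 : 0 < d) (hd1 : d < 1) :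
    x * Gamma x ≤ Gamma (x + d) * (x + d) ^ (1 - d) := by
  have hxd : 0 < x + d := by linarith
  have hconv := Gamma_mul_add_mul_le_rpow_Gamma_mul_rpow_Gamma (s := x + d) (t := x + d + 1)
    (a := d) (b := 1 - d) hxd (by linarith) hd0 (by linarith) (by ring)
  have hG := Gamma_pos_of_pos hxd
  rw [show d * (x + d) + (1 - d) * (x + d + 1) = x + 1 by ring, Gamma_add_one hx.ne',
    Gamma_add_one hxd.ne', mul_rpow hxd.le hG.le] at hconv
  calc x * Gamma x ≤ Gamma (x + d) ^ d * ((x + d) ^ (1 - d) * Gamma (x + d) ^ (1 - d)) := hconv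
    _ = Gamma (x + d) ^ (d + (1 - d)) * (x + d) ^ (1 - d) := by rw [rpow_add hG]; ring
    _ = Gamma (x + d) * (x + d) ^ (1 - d) := by norm_num

theorem tendsto_Gamma_add_div_Gamma_mul_rpow (hd0 : 0 < d) (hd1 : d < 1) :
    Tendsto (fun x ↦ Gamma (x + d) / (Gamma x * x ^ d)) atTop (nhds 1) := by
  have hlower : Tendsto (fun x : ℝ ↦ (x / (x + d)) ^ (1 - d)) atTop (nhds 1) := by
    have hfrac : Tendsto (fun x : ℝ ↦ x / (x + d)) atTop (nhds 1) := by
      have h := (tendsto_const_nhds (x := d)).div_atTop (tendsto_atTop_add_const_right _ d tendsto_id)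
      refine ((tendsto_const_nhds (x := (1 : ℝ))).sub h).congr' ?_ |>.trans (by norm_num)
      filter_upwards [eventually_gt_atTop 0] with x hx
      have : x + d ≠ 0 := by positivity
      simp only [id]
      field_simp
      ring
    simpa using hfrac.rpow_const (Or.inl one_ne_zero)
  refine tendsto_of_tendsto_of_tendsto_of_le_of_le' hlower tendsto_const_nhds ?_ ?_
  · filter_upwards [eventually_gt_atTop 0] with x hx
    have hxd : 0 < x + d := by linarith
    have hG := Gamma_pos_of_pos hx
    rw [div_rpow hx.le hxd.le, div_le_div_iff₀ (by positivity) (by positivity)]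
    calc x ^ (1 - d) * (Gamma x * x ^ d) = x ^ (1 - d + d) * Gamma x := by rw [rpow_add hx]; ring
      _ = x * Gamma x := by norm_num
      _ ≤ Gamma (x + d) * (x + d) ^ (1 - d) := mul_Gamma_le_Gamma_add_mul_rpow hx hd0 hd1
  · filter_upwards [eventually_gt_atTop 0] with x hx
    have hG := Gamma_pos_of_pos hx
    rw [div_le_one (by positivity)]
    exact Gamma_add_le_Gamma_mul_rpow hx hd0 hd1

theorem Gamma_add_one_add_div_sub (hx : 0 < x) (hd : 0 ≤ d) :
    Gamma (x + 1 + d) / Gamma (x + 1) - Gamma (x + d) / Gamma x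
      = d * (Gamma (x + d) / Gamma x / x) := by
  have hxd : x + d ≠ 0 := by positivity
  have hG := (Gamma_pos_of_pos hx).ne'
  rw [add_right_comm, Gamma_add_one hxd, Gamma_add_one hx.ne']
  field_simp
  ring

theorem Gamma_add_nat_add_div_sub_eq_sum (hx : 0 < x) (hd : 0 ≤ d) (M : ℕ) :
    Gamma (x + M + d) / Gamma (x + M) - Gamma (x + d) / Gamma x
      = ∑ j ∈ Finset.range M, d * (Gamma (x + j + d) / Gamma (x + j) / (x + j)) := by
  have hstep (j : ℕ) : d * (Gamma (x + j + d) / Gamma (x + j) / (x + j)) =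
      Gamma (x + ↑(j + 1) + d) / Gamma (x + ↑(j + 1)) - Gamma (x + j + d) / Gamma (x + j) := by
    rw [Nat.cast_succ, ← add_assoc]
    exact (Gamma_add_one_add_div_sub (by positivity) hd).symm
  rw [Finset.sum_congr rfl fun j _ ↦ hstep j,
    Finset.sum_range_sub (fun j : ℕ ↦ Gamma (x + j + d) / Gamma (x + j)), Nat.cast_zero, add_zero]

end Real

section Asymptotics

variable {d s : ℝ}

theorem tendsto_Gamma_ratio_div_self_div_rpow (hd0 : 0 < d) (hd1 : d < 1) (hs : 0 < s) (c : ℝ) :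
    Tendsto (fun K : ℕ ↦ Gamma (c + K * s + d) / Gamma (c + K * s) / (c + K * s) / (K : ℝ) ^ (d - 1))
      atTop (nhds (s ^ (d - 1))) := by
  have hy : Tendsto (fun K : ℕ ↦ c + K * s) atTop atTop :=
    tendsto_atTop_add_const_left _ c (tendsto_natCast_atTop_atTop.atTop_mul_const hs)
  have hGamma := (tendsto_Gamma_add_div_Gamma_mul_rpow hd0 hd1).comp hy
  have hscale : Tendsto (fun K : ℕ ↦ (c + K * s) / K) atTop (nhds s) := by
    have h := (tendsto_const_nhds (x := s)).add
      ((tendsto_const_nhds (x := c)).div_atTop tendsto_natCast_atTop_atTop)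
    rw [add_zero] at h
    refine h.congr' ?_
    filter_upwards [eventually_gt_atTop 0] with K hK
    have : (K : ℝ) ≠ 0 := by positivity
    field_simp
    ring
  have hprod := hGamma.mul (hscale.rpow_const (p := d - 1) (Or.inl hs.ne'))
  rw [one_mul] at hprod
  refine hprod.congr' ?_
  filter_upwards [eventually_gt_atTop 0, hy.eventually_gt_atTop 0] with K hK hyK
  have hK : (0 : ℝ) < K := by exact_mod_cast hK
  have hG := (Gamma_pos_of_pos hyK).ne'
  have hyd := (rpow_pos_of_pos hyK d).ne'
  have hKd := (rpow_pos_of_pos hK (d - 1)).ne'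
  simp only [Function.comp_apply]
  rw [div_rpow hyK.le hK.le, rpow_sub_one hyK.ne']
  field_simp

theorem tendsto_Gamma_ratio_add_nat_sub_div_rpow (hd0 : 0 < d) (hd1 : d < 1) (hs : 0 < s)
    (c : ℝ) (M : ℕ) :
    Tendsto (fun K : ℕ ↦ (Gamma (c + K * s + M + d) / Gamma (c + K * s + M)
        - Gamma (c + K * s + d) / Gamma (c + K * s)) / (K : ℝ) ^ (d - 1))
      atTop (nhds (M * (d * s ^ (d - 1)))) := by
  have hterm (j : ℕ) := ((tendsto_Gamma_ratio_div_self_div_rpow hd0 hd1 hs (c + j)).const_mul d)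
  have hsum := tendsto_finsetSum (Finset.range M) fun j _ ↦ hterm j
  rw [Finset.sum_const, Finset.card_range, nsmul_eq_mul] at hsum
  refine hsum.congr' ?_
  have hy : Tendsto (fun K : ℕ ↦ c + K * s) atTop atTop :=
    tendsto_atTop_add_const_left _ c (tendsto_natCast_atTop_atTop.atTop_mul_const hs)
  filter_upwards [hy.eventually_gt_atTop 0] with K hyK
  rw [Gamma_add_nat_add_div_sub_eq_sum hyK hd0.le, Finset.sum_div]
  refine Finset.sum_congr rfl fun j _ ↦ ?_
  rw [show c + j + K * s = c + K * s + j by ring, mul_div_assoc]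

end Asymptotics

/-- Asymptotics of the size-biased truncation error for the beta process with
Bernoulli (`s = 1`) or negative binomial (`s` failures) likelihoods and
discount `d ∈ (0,1)`:  as `K → ∞`,
`Γ(α+d+(K+N)s)/Γ(α+(K+N)s) - Γ(α+d+Ks)/Γ(α+Ks) ∼ d·N·s^d·K^(d-1)`. -/
theorem beta_process_size_biased_error_asymptotic
    (α d : ℝ) (hd0 : 0 < d) (hd1 : d < 1) (s N : ℕ) (hs : 1 ≤ s) (hN : 1 ≤ N) :
    Filter.Tendsto
      (fun K : ℕ =>
        (Real.Gamma (α + d + ((K : ℝ) + (N : ℝ)) * (s : ℝ)) /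
            Real.Gamma (α + ((K : ℝ) + (N : ℝ)) * (s : ℝ))
          - Real.Gamma (α + d + (K : ℝ) * (s : ℝ)) /
              Real.Gamma (α + (K : ℝ) * (s : ℝ))) /
        (d * (N : ℝ) * (s : ℝ) ^ d * (K : ℝ) ^ (d - 1)))
      Filter.atTop (nhds 1) := by
  have hs' : (0 : ℝ) < s := by exact_mod_cast hs
  have hN' : (0 : ℝ) < N := by exact_mod_cast hN
  have hlim := (tendsto_Gamma_ratio_add_nat_sub_div_rpow hd0 hd1 hs' α (N * s)).div_const
    (d * N * s ^ d)
  have hconst : ((N * s : ℕ) : ℝ) * (d * s ^ (d - 1)) = d * N * s ^ d := by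
    rw [rpow_sub_one hs'.ne']
    push_cast
    field_simp
  rw [hconst, div_self (by positivity)] at hlim
  refine hlim.congr fun K ↦ ?_
  rw [div_div, mul_comm ((K : ℝ) ^ (d - 1))]
  congr 4 <;> push_cast <;> ring
end

section
/- For every real number α > 0 and every t ∈ (0,1), ∫₀^∞ θ^(−1) e^(−αθ) · (α^α/Γ(α)) · (θ(1−t)/t)^(α−1) · e^(−αθ(1−t)/t) · (θ/t²) dθ = t^(−1) (1−t)^(α−1). (This verifies that applying the stochastic mapping θ ↦ θ/(θ+G) with G ∼ Gamma(α, α) to the gamma-process rate density γα·θ^(−1)e^(−αθ) produces the beta-process rate density γα·t^(−1)(1−t)^(α−1).) -/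
open Real MeasureTheory

/-- Applying the stochastic mapping `θ ↦ θ/(θ+G)` with `G ∼ Gamma(α,α)` to the
gamma-process rate density `θ ↦ θ⁻¹ e^(-αθ)` produces the beta-process rate
density `t ↦ t⁻¹ (1-t)^(α-1)`: for `α > 0` and `t ∈ (0,1)`,
`∫₀^∞ θ⁻¹ e^(-αθ) (α^α/Γ(α)) (θ(1-t)/t)^(α-1) e^(-αθ(1-t)/t) (θ/t²) dθ
  = t⁻¹ (1-t)^(α-1)`. -/
theorem gamma_to_beta_stochastic_mapping
    (α : ℝ) (hα : 0 < α) (t : ℝ) (ht0 : 0 < t) (ht1 : t < 1) :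
    ∫ θ in Set.Ioi (0:ℝ),
        θ⁻¹ * Real.exp (-α * θ) * (α ^ α / Real.Gamma α) *
          (θ * (1 - t) / t) ^ (α - 1) * Real.exp (-α * θ * (1 - t) / t) *
          (θ / t ^ 2)
      = t⁻¹ * (1 - t) ^ (α - 1) := by
  have h1t : 0 < 1 - t := by linarith
  have hΓ : 0 < Real.Gamma α := Real.Gamma_pos_of_pos hα
  have hr : 0 < α / t := div_pos hα ht0
  have key : ∀ θ ∈ Set.Ioi (0:ℝ),
      θ⁻¹ * Real.exp (-α * θ) * (α ^ α / Real.Gamma α) *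
          (θ * (1 - t) / t) ^ (α - 1) * Real.exp (-α * θ * (1 - t) / t) *
          (θ / t ^ 2)
      = (α ^ α / Real.Gamma α * ((1 - t) / t) ^ (α - 1) / t ^ 2) *
          (θ ^ (α - 1) * Real.exp (-(α / t * θ))) := by
    intro θ hθ
    have hθ0 : (0:ℝ) < θ := hθ
    have he : Real.exp (-α * θ) * Real.exp (-α * θ * (1 - t) / t)
        = Real.exp (-(α / t * θ)) := by
      rw [← Real.exp_add]
      congr 1
      field_simp
      ring
    rw [show θ * (1 - t) / t = θ * ((1 - t) / t) by ring,
        Real.mul_rpow hθ0.le (by positivity)]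
    calc θ⁻¹ * Real.exp (-α * θ) * (α ^ α / Real.Gamma α) *
          (θ ^ (α - 1) * ((1 - t) / t) ^ (α - 1)) * Real.exp (-α * θ * (1 - t) / t) *
          (θ / t ^ 2)
        = (θ⁻¹ * θ) * ((α ^ α / Real.Gamma α * ((1 - t) / t) ^ (α - 1) / t ^ 2) *
          (θ ^ (α - 1) * (Real.exp (-α * θ) * Real.exp (-α * θ * (1 - t) / t)))) := by
          ring
      _ = _ := by rw [he, inv_mul_cancel₀ hθ0.ne']; ring
  rw [setIntegral_congr_fun measurableSet_Ioi key, integral_const_mul,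
      Real.integral_rpow_mul_exp_neg_mul_Ioi hα hr]
  rw [Real.div_rpow h1t.le ht0.le, one_div, Real.inv_rpow hr.le,
      Real.div_rpow hα.le ht0.le]
  rw [show α - 1 = α - 1 by rfl]
  have ht2 : t ^ (α - 1) ≠ 0 := by positivity
  have hta : (t:ℝ) ^ α = t ^ (α - 1) * t := by
    rw [← Real.rpow_add_one ht0.ne' (α - 1)]; ring_nf
  field_simp
  rw [hta]
  ring
end

section
/- For all real numbers α > 0, d ∈ (0,1), and u > 0, ∫₀^∞ θ^(−1−d) e^(−θ) · (1/Γ(α+d)) · (θ/u)^(α+d−1) · e^(−θ/u) · (θ/u²) dθ = (Γ(α)/Γ(α+d)) · u^(−1−d) (1+u)^(−α). (This verifies that applying the stochastic mapping θ ↦ θ/G with G ∼ Gamma(α+d, 1) to the power-law gamma-process rate density proportional to θ^(−1−d)e^(−θ) produces a rate density proportional to the beta prime density u^(−1−d)(1+u)^(−α).) -/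
open Real MeasureTheory

/-- Applying the stochastic mapping `θ ↦ θ/G` with `G ∼ Gamma(α+d,1)` to the
power-law gamma-process rate density proportional to `θ^(-1-d) e^(-θ)` produces
a rate density proportional to the beta prime density `u^(-1-d)(1+u)^(-α)`:
for `α > 0`, `d ∈ (0,1)` and `u > 0`,
`∫₀^∞ θ^(-1-d) e^(-θ) (1/Γ(α+d)) (θ/u)^(α+d-1) e^(-θ/u) (θ/u²) dθ
  = (Γ(α)/Γ(α+d)) u^(-1-d) (1+u)^(-α)`. -/
theorem gamma_to_beta_prime_stochastic_mapping
    (α d u : ℝ) (hα : 0 < α) (hd0 : 0 < d) (hd1 : d < 1) (hu : 0 < u) :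
    ∫ θ in Set.Ioi (0:ℝ),
        θ ^ (-1 - d) * Real.exp (-θ) * (1 / Real.Gamma (α + d)) *
          (θ / u) ^ (α + d - 1) * Real.exp (-θ / u) * (θ / u ^ 2)
      = (Real.Gamma α / Real.Gamma (α + d)) * u ^ (-1 - d) * (1 + u) ^ (-α) := by
  have hG : 0 < Real.Gamma (α + d) := Real.Gamma_pos_of_pos (by linarith)
  have key : ∫ θ in Set.Ioi (0:ℝ),
      θ ^ (-1 - d) * Real.exp (-θ) * (1 / Real.Gamma (α + d)) *
        (θ / u) ^ (α + d - 1) * Real.exp (-θ / u) * (θ / u ^ 2)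
      = (1 / Real.Gamma (α + d)) * (u ^ (-(α + d - 1)) / u ^ 2) *
        ∫ θ in Set.Ioi (0:ℝ), θ ^ (α - 1) * Real.exp (-((1 + 1/u) * θ)) := by
    rw [← MeasureTheory.integral_const_mul]
    refine MeasureTheory.setIntegral_congr_fun measurableSet_Ioi (fun θ hθ => ?_)
    have hθ0 : (0:ℝ) < θ := hθ
    have hexp : Real.exp (-((1 + 1/u) * θ)) = Real.exp (-θ) * Real.exp (-θ/u) := by
      rw [← Real.exp_add]; congr 1; field_simp; ring
    have h1 : θ ^ (-1 - d) * (θ ^ (α + d - 1)) * θ = θ ^ (α - 1) := by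
      rw [← Real.rpow_add hθ0, ← Real.rpow_add_one hθ0.ne']
      ring_nf
    rw [Real.div_rpow hθ0.le hu.le, hexp, ← h1, Real.rpow_neg hu.le]
    ring
  rw [key, integral_rpow_mul_exp_neg_mul_Ioi hα (by positivity)]
  have h1u : (1:ℝ) + 1/u = (1 + u)/u := by field_simp; ring
  have h1u0 : (0:ℝ) < 1 + u := by linarith
  rw [h1u, one_div ((1+u)/u), inv_div, Real.div_rpow hu.le h1u0.le,
    Real.rpow_neg h1u0.le α]
  have e1 : u ^ (-(α+d-1)) * u ^ α = u ^ ((1:ℝ)-d) := by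
    rw [← Real.rpow_add hu]; ring_nf
  have e2 : u ^ ((-1:ℝ)-d) * u ^ (2:ℕ) = u ^ ((1:ℝ)-d) := by
    rw [← Real.rpow_natCast u 2, ← Real.rpow_add hu]; ring_nf
  have e3 : u ^ (-(α+d-1)) * u ^ α = u ^ ((-1:ℝ)-d) * u ^ (2:ℕ) := e1.trans e2.symm
  have hu2 : u ^ (2:ℕ) * u⁻¹ ^ (2:ℕ) = (1:ℝ) := by field_simp
  linear_combination (Real.Gamma α * ((1+u)^α)⁻¹ / (Real.Gamma (α+d) * u^2)) * e3 +
    ((Real.Gamma (α+d))⁻¹ * ((1+u)^α)⁻¹ * Real.Gamma α * u ^ ((-1:ℝ)-d)) * hu2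
end

section
/- For every real number d ∈ (0,1), as K → ∞ along the natural numbers, the product over k from 1 to K of (1+kd)/(2+kd−d) is asymptotically equivalent to (Γ(2/d)/Γ((1+d)/d)) · K^(1−1/d); that is, the ratio of the product to (Γ(2/d)/Γ((1+d)/d))·K^(1−1/d) converges to 1 as K → ∞. -/
/-!
With `a = (1 + d) / d` and `b = 2 / d` the `k`-th factor is `(a + k - 1) / (b + k - 1)`, so the
product is a quotient of rising factorials. Euler's limit formula
`Γ(s) = lim n^s n! / (s (s + 1) ⋯ (s + n))` then gives `∏_{j<n} (a + j) / (b + j) ∼ Γ(b) / Γ(a) · n^(a - b)`,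
and `a - b = 1 - 1 / d`.
-/

open Real Filter Finset Topology

namespace Real

theorem GammaSeq_div_GammaSeq {a b : ℝ} (ha : 0 < a) (hb : 0 < b) {n : ℕ} (hn : n ≠ 0) :
    GammaSeq b n / GammaSeq a n =
      (∏ j ∈ range n, (a + j) / (b + j)) / (n : ℝ) ^ (a - b) * ((a + n) / (b + n)) := by
  have hn_pos : (0 : ℝ) < n := by positivity
  have hpow : (n : ℝ) ^ a = (n : ℝ) ^ (a - b) * (n : ℝ) ^ b := by
    rw [← rpow_add hn_pos, sub_add_cancel]
  have : ∏ j ∈ range n, (a + j) ≠ 0 := prod_ne_zero_iff.2 fun j _ => by positivity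
  have : ∏ j ∈ range n, (b + j) ≠ 0 := prod_ne_zero_iff.2 fun j _ => by positivity
  simp only [GammaSeq, prod_range_succ, prod_div_distrib, hpow]
  field_simp

theorem tendsto_prod_add_div_add_div_rpow {a b : ℝ} (ha : 0 < a) (hb : 0 < b) :
    Tendsto (fun n : ℕ => (∏ j ∈ range n, (a + j) / (b + j)) / (n : ℝ) ^ (a - b))
      atTop (𝓝 (Gamma b / Gamma a)) := by
  have hGamma : Tendsto (fun n => GammaSeq b n / GammaSeq a n) atTop (𝓝 (Gamma b / Gamma a)) :=
    (GammaSeq_tendsto_Gamma b).div (GammaSeq_tendsto_Gamma a) (Gamma_pos_of_pos ha).ne'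
  have hratio : Tendsto (fun n : ℕ => (b + n) / (a + n)) atTop (𝓝 1) := by
    simpa using tendsto_add_mul_div_add_mul_atTop_nhds b a 1 one_ne_zero
  rw [← mul_one (Gamma b / Gamma a)]
  refine (hGamma.mul hratio).congr' ?_
  filter_upwards [eventually_ne_atTop 0] with n hn
  have : b + n ≠ 0 := by positivity
  rw [GammaSeq_div_GammaSeq ha hb hn]
  field_simp

end Real

theorem prod_Icc_one_add_mul_div_eq_prod_range {d : ℝ} (hd : d ≠ 0) (K : ℕ) :
    ∏ k ∈ Icc 1 K, (1 + (k : ℝ) * d) / (2 + (k : ℝ) * d - d) =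
      ∏ j ∈ range K, ((1 + d) / d + j) / (2 / d + j) := by
  rw [← Ico_add_one_right_eq_Icc, prod_Ico_eq_prod_range]
  refine prod_congr (by simp) fun j _ => ?_
  rw [← mul_div_mul_left _ _ hd]
  push_cast
  field_simp
  ring_nf

theorem beta_prime_power_law_product_asymptotic_general
    (d : ℝ) (hd0 : 0 < d) :
    Filter.Tendsto
      (fun K : ℕ =>
        (∏ k ∈ Finset.Icc 1 K, (1 + (k : ℝ) * d) / (2 + (k : ℝ) * d - d)) /
          ((Real.Gamma (2 / d) / Real.Gamma ((1 + d) / d)) *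
            (K : ℝ) ^ (1 - 1 / d)))
      Filter.atTop (nhds 1) := by
  have hexp : (1 + d) / d - 2 / d = 1 - 1 / d := by field_simp; ring
  have hlim := tendsto_prod_add_div_add_div_rpow (a := (1 + d) / d) (b := 2 / d)
    (by positivity) (by positivity)
  have hC : Gamma (2 / d) / Gamma ((1 + d) / d) ≠ 0 :=
    div_ne_zero (Gamma_pos_of_pos (by positivity)).ne' (Gamma_pos_of_pos (by positivity)).ne'
  simp only [hexp, ← prod_Icc_one_add_mul_div_eq_prod_range hd0.ne'] at hlim
  convert hlim.div_const (Gamma (2 / d) / Gamma ((1 + d) / d)) using 2 with K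
  · rw [div_div, mul_comm]
  · exact (div_self hC).symm

/-- Asymptotics of the truncation error bound of the power-law representation
of the beta prime process: for `d ∈ (0,1)`, as `K → ∞`,
`∏_{k=1}^{K} (1+kd)/(2+kd-d) ∼ (Γ(2/d)/Γ((1+d)/d)) K^(1-1/d)`. -/
theorem beta_prime_power_law_product_asymptotic
    (d : ℝ) (hd0 : 0 < d) (hd1 : d < 1) :
    Filter.Tendsto
      (fun K : ℕ =>
        (∏ k ∈ Finset.Icc 1 K, (1 + (k : ℝ) * d) / (2 + (k : ℝ) * d - d)) /
          ((Real.Gamma (2 / d) / Real.Gamma ((1 + d) / d)) *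
            (K : ℝ) ^ (1 - 1 / d)))
      Filter.atTop (nhds 1) :=
  beta_prime_power_law_product_asymptotic_general d hd0
end

section
/- For all real numbers α > 0 and d ∈ (0,1), ∫₀^∞ x^(−1−d) (1 − (1+x)^(−α)) dx = (α/d) · Γ(1−d)·Γ(α+d)/Γ(α+1). Consequently, the expected number of rejections in the rejection representation of the beta prime process BPP(γ, α, d) with proposal rate measure γ·(Γ(α+1)/(Γ(1−d)Γ(α+d)))·x^(−1−d) dx equals γα/d. -/
/-!
Integrating by parts against `x ^ (-d)`, whose boundary terms vanish because
`0 ≤ 1 - (1 + x) ^ (-α) ≤ min 1 (α x)`, gives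
`∫₀^∞ x^(-1-d) (1 - (1+x)^(-α)) dx = (α/d) ∫₀^∞ x^(-d) (1+x)^(-α-1) dx`.
The last integral is a beta integral of the second kind: the substitution `x = u / (1 - u)`
turns it into `B(1 - d, α + d) = Γ(1-d) Γ(α+d) / Γ(α+1)`.
-/

open Real MeasureTheory Set Filter Topology Asymptotics

theorem integral_Ioo_rpow_mul_one_sub_rpow {a b : ℝ} (ha : 0 < a) (hb : 0 < b) :
    ∫ x in Ioo (0 : ℝ) 1, x ^ (a - 1) * (1 - x) ^ (b - 1) = Gamma a * Gamma b / Gamma (a + b) := by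
  rw [← ProbabilityTheory.beta, ProbabilityTheory.beta_eq_betaIntegralReal a b ha hb,
    Complex.betaIntegral, intervalIntegral.integral_of_le zero_le_one,
    ← integral_Ioc_eq_integral_Ioo, ← RCLike.re_to_complex, ← integral_re]
  · refine setIntegral_congr_fun measurableSet_Ioc fun x ⟨hx0, hx1⟩ ↦ ?_
    norm_cast
    rw [← Complex.ofReal_cpow hx0.le, ← Complex.ofReal_cpow (by linarith), RCLike.re_to_complex,
      ← Complex.ofReal_mul, Complex.ofReal_re]
  · rw [← IntegrableOn, ← intervalIntegrable_iff_integrableOn_Ioc_of_le zero_le_one]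
    exact Complex.betaIntegral_convergent (by simpa) (by simpa)

theorem one_sub_one_add_rpow_neg_le_mul {α x : ℝ} (hα : 0 ≤ α) (hx : -1 < x) :
    1 - (1 + x) ^ (-α) ≤ α * x := by
  have hlog : log (1 + x) ≤ x := by linarith [log_le_sub_one_of_pos (by linarith : 0 < 1 + x)]
  have hexp : -α * log (1 + x) + 1 ≤ (1 + x) ^ (-α) := by
    rw [rpow_def_of_pos (by linarith), mul_comm]
    exact add_one_le_exp _
  nlinarith

theorem one_sub_one_add_rpow_neg_nonneg {α x : ℝ} (hα : 0 ≤ α) (hx : 0 ≤ x) :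
    0 ≤ 1 - (1 + x) ^ (-α) :=
  sub_nonneg.mpr (rpow_le_one_of_one_le_of_nonpos (by linarith) (by linarith))

theorem image_div_one_sub_Ioo : (fun u : ℝ ↦ u / (1 - u)) '' Ioo 0 1 = Ioi 0 := by
  ext x
  constructor
  · rintro ⟨u, ⟨hu0, hu1⟩, rfl⟩
    exact div_pos hu0 (sub_pos.mpr hu1)
  · intro (hx : 0 < x)
    refine ⟨x / (1 + x), ⟨by positivity, (div_lt_one (by linarith)).mpr (by linarith)⟩, ?_⟩
    field_simp
    ring

theorem integral_Ioi_rpow_mul_one_add_rpow_eq_integral_Ioo (s t : ℝ) :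
    ∫ x in Ioi (0 : ℝ), x ^ (s - 1) * (1 + x) ^ (-(s + t))
      = ∫ u in Ioo (0 : ℝ) 1, u ^ (s - 1) * (1 - u) ^ (t - 1) := by
  have hderiv : ∀ u ∈ Ioo (0 : ℝ) 1,
      HasDerivWithinAt (fun u ↦ u / (1 - u)) ((1 - u) ^ 2)⁻¹ (Ioo 0 1) u := by
    intro u ⟨_, hu1⟩
    have h1u : 1 - u ≠ 0 := (sub_pos.mpr hu1).ne'
    refine ((hasDerivAt_id u).div ((hasDerivAt_id u).const_sub 1) h1u).hasDerivWithinAt.congr_deriv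
      ?_
    simp only [id]
    field_simp
    ring
  have hinj : InjOn (fun u : ℝ ↦ u / (1 - u)) (Ioo 0 1) := by
    intro u ⟨_, hu1⟩ v ⟨_, hv1⟩ huv
    field_simp [(sub_pos.mpr hu1).ne', (sub_pos.mpr hv1).ne'] at huv
    linarith
  rw [← image_div_one_sub_Ioo,
    integral_image_eq_integral_abs_deriv_smul measurableSet_Ioo hderiv hinj]
  refine setIntegral_congr_fun measurableSet_Ioo fun u ⟨hu0, hu1⟩ ↦ ?_
  have hw : 0 < 1 - u := sub_pos.mpr hu1
  have hsplit : (1 - u) ^ (s + t) = (1 - u) ^ (s - 1) * (1 - u) ^ (t - 1) * (1 - u) ^ 2 := by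
    rw [← rpow_natCast, ← rpow_add hw, ← rpow_add hw]
    ring_nf
  have hone_add : 1 + u / (1 - u) = (1 - u)⁻¹ := by field_simp; ring
  rw [smul_eq_mul, hone_add, abs_of_pos (by positivity), div_rpow hu0.le hw.le, inv_rpow hw.le,
    rpow_neg hw.le, inv_inv, hsplit]
  field_simp

theorem integral_Ioi_rpow_mul_one_add_rpow_neg {s t : ℝ} (hs : 0 < s) (ht : 0 < t) :
    ∫ x in Ioi (0 : ℝ), x ^ (s - 1) * (1 + x) ^ (-(s + t)) = Gamma s * Gamma t / Gamma (s + t) := by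
  rw [integral_Ioi_rpow_mul_one_add_rpow_eq_integral_Ioo, integral_Ioo_rpow_mul_one_sub_rpow hs ht]

theorem continuousOn_one_add_rpow (p : ℝ) : ContinuousOn (fun x : ℝ ↦ (1 + x) ^ p) (Ioi 0) :=
  (continuousOn_const.add continuousOn_id).rpow_const fun x (hx : 0 < x) ↦
    Or.inl (add_pos one_pos hx).ne'

theorem integrableOn_Ioi_rpow_mul_one_add_rpow_neg {s t : ℝ} (hs : 0 < s) (ht : 0 < t) :
    IntegrableOn (fun x : ℝ ↦ x ^ (s - 1) * (1 + x) ^ (-(s + t))) (Ioi 0) := by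
  refine mellin_convergent_of_isBigO_scalar (a := s + t) (b := 0)
    ((continuousOn_one_add_rpow _).locallyIntegrableOn measurableSet_Ioi) ?_ (by linarith) ?_ hs
  · refine IsBigO.of_bound 1 ?_
    filter_upwards [eventually_gt_atTop 0] with x hx
    rw [one_mul, norm_of_nonneg (by positivity), norm_of_nonneg (by positivity)]
    exact rpow_le_rpow_of_nonpos hx (by linarith) (by linarith)
  · refine IsBigO.of_bound 1 ?_
    filter_upwards [self_mem_nhdsWithin] with x (hx : 0 < x)
    rw [neg_zero, rpow_zero, one_mul, norm_one, norm_of_nonneg (by positivity)]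
    exact rpow_le_one_of_one_le_of_nonpos (by linarith) (by linarith)

theorem integrableOn_Ioi_rpow_mul_one_sub_one_add_rpow_neg {α d : ℝ} (hα : 0 ≤ α) (hd0 : 0 < d)
    (hd1 : d < 1) :
    IntegrableOn (fun x : ℝ ↦ x ^ (-1 - d) * (1 - (1 + x) ^ (-α))) (Ioi 0) := by
  rw [show -1 - d = -d - 1 by ring]
  refine mellin_convergent_of_isBigO_scalar (a := 0) (b := -1)
    ((continuousOn_const.sub (continuousOn_one_add_rpow _)).locallyIntegrableOn
      measurableSet_Ioi) ?_ (by linarith) ?_ (by linarith)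
  · refine IsBigO.of_bound 1 ?_
    filter_upwards [eventually_gt_atTop 0] with x hx
    rw [neg_zero, rpow_zero, one_mul, norm_one,
      norm_of_nonneg (one_sub_one_add_rpow_neg_nonneg hα hx.le)]
    linarith [rpow_nonneg (by linarith : 0 ≤ 1 + x) (-α)]
  · refine IsBigO.of_bound α ?_
    filter_upwards [self_mem_nhdsWithin] with x (hx : 0 < x)
    rw [neg_neg, rpow_one, norm_of_nonneg (one_sub_one_add_rpow_neg_nonneg hα hx.le),
      norm_of_nonneg hx.le]
    exact one_sub_one_add_rpow_neg_le_mul hα (by linarith)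

theorem tendsto_nhdsGT_rpow_neg_mul_one_sub_one_add_rpow_neg {α d : ℝ} (hα : 0 ≤ α)
    (hd1 : d < 1) :
    Tendsto (fun x : ℝ ↦ x ^ (-d) * (1 - (1 + x) ^ (-α))) (𝓝[>] 0) (𝓝 0) := by
  have hlim : Tendsto (fun x : ℝ ↦ α * x ^ (1 - d)) (𝓝[>] 0) (𝓝 0) := by
    have h := (continuousAt_rpow_const 0 (1 - d) (Or.inr (by linarith))).tendsto.const_mul α
    rw [zero_rpow (by linarith), mul_zero] at h
    exact tendsto_nhdsWithin_of_tendsto_nhds h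
  refine squeeze_zero' ?_ ?_ hlim <;> filter_upwards [self_mem_nhdsWithin] with x (hx : 0 < x)
  · exact mul_nonneg (rpow_nonneg hx.le _) (one_sub_one_add_rpow_neg_nonneg hα hx.le)
  · calc x ^ (-d) * (1 - (1 + x) ^ (-α)) ≤ x ^ (-d) * (α * x) := by
          gcongr
          exact one_sub_one_add_rpow_neg_le_mul hα (by linarith)
      _ = α * x ^ (1 - d) := by rw [sub_eq_neg_add, rpow_add_one hx.ne']; ring

theorem tendsto_atTop_rpow_neg_mul_one_sub_one_add_rpow_neg {α d : ℝ} (hα : 0 ≤ α)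
    (hd0 : 0 < d) :
    Tendsto (fun x : ℝ ↦ x ^ (-d) * (1 - (1 + x) ^ (-α))) atTop (𝓝 0) := by
  refine squeeze_zero' ?_ ?_ (tendsto_rpow_neg_atTop hd0) <;>
    filter_upwards [eventually_gt_atTop 0] with x hx
  · exact mul_nonneg (rpow_nonneg hx.le _) (one_sub_one_add_rpow_neg_nonneg hα hx.le)
  · refine mul_le_of_le_one_right (rpow_nonneg hx.le _) ?_
    linarith [rpow_nonneg (by linarith : 0 ≤ 1 + x) (-α)]

theorem integral_Ioi_rpow_mul_one_sub_one_add_rpow_neg {α d : ℝ} (hα : 0 ≤ α) (hd0 : 0 < d)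
    (hd1 : d < 1) :
    ∫ x in Ioi (0 : ℝ), x ^ (-1 - d) * (1 - (1 + x) ^ (-α))
      = α / d * ∫ x in Ioi (0 : ℝ), x ^ (-d) * (1 + x) ^ (-α - 1) := by
  have hu : ∀ x ∈ Ioi (0 : ℝ), HasDerivAt (fun x ↦ x ^ (-d)) (-d * x ^ (-1 - d)) x := fun x hx ↦ by
    simpa [show -d - 1 = -1 - d by ring] using hasDerivAt_rpow_const (p := -d) (Or.inl hx.ne')
  have hv : ∀ x ∈ Ioi (0 : ℝ),
      HasDerivAt (fun x ↦ 1 - (1 + x) ^ (-α)) (α * (1 + x) ^ (-α - 1)) x := fun x hx ↦ by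
    have h := (((hasDerivAt_id x).const_add 1).rpow_const (p := -α)
      (Or.inl (add_pos one_pos hx).ne')).const_sub 1
    simpa using h
  have huv' : IntegrableOn (fun x ↦ x ^ (-d) * (α * (1 + x) ^ (-α - 1))) (Ioi 0) := by
    have h := integrableOn_Ioi_rpow_mul_one_add_rpow_neg (s := 1 - d) (t := α + d) (by linarith)
      (by linarith)
    rw [show 1 - d - 1 = -d by ring, show -(1 - d + (α + d)) = -α - 1 by ring] at h
    simp_rw [mul_left_comm _ α]
    exact h.const_mul α
  have hu'v : IntegrableOn (fun x ↦ -d * x ^ (-1 - d) * (1 - (1 + x) ^ (-α))) (Ioi 0) := by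
    simp_rw [mul_assoc]
    exact (integrableOn_Ioi_rpow_mul_one_sub_one_add_rpow_neg hα hd0 hd1).const_mul (-d)
  have hibp := integral_Ioi_mul_deriv_eq_deriv_mul hu hv huv' hu'v
    (tendsto_nhdsGT_rpow_neg_mul_one_sub_one_add_rpow_neg hα hd1)
    (tendsto_atTop_rpow_neg_mul_one_sub_one_add_rpow_neg hα hd0)
  simp_rw [mul_left_comm _ α, mul_assoc, integral_const_mul] at hibp
  field_simp
  linarith

/-- For `α > 0` and `d ∈ (0,1)`,
`∫₀^∞ x^(-1-d) (1 - (1+x)^(-α)) dx = (α/d) Γ(1-d)Γ(α+d)/Γ(α+1)`.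
Consequently, the expected number of rejections in the rejection
representation of the beta prime process `BPP(γ, α, d)` with proposal rate
measure `γ (Γ(α+1)/(Γ(1-d)Γ(α+d))) x^(-1-d) dx` equals `γα/d`. -/
theorem beta_prime_rejection_expected_rejections_power_law
    (α d : ℝ) (hα : 0 < α) (hd0 : 0 < d) (hd1 : d < 1) :
    (∫ x in Set.Ioi (0:ℝ), x ^ (-1 - d) * (1 - (1 + x) ^ (-α))
        = (α / d) * Real.Gamma (1 - d) * Real.Gamma (α + d) / Real.Gamma (α + 1)) ∧
    (∀ γ : ℝ, 0 < γ →
      γ * (Real.Gamma (α + 1) / (Real.Gamma (1 - d) * Real.Gamma (α + d))) *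
          ∫ x in Set.Ioi (0:ℝ), x ^ (-1 - d) * (1 - (1 + x) ^ (-α))
        = γ * α / d) := by
  have hbeta : ∫ x in Ioi (0 : ℝ), x ^ (-d) * (1 + x) ^ (-α - 1)
      = Gamma (1 - d) * Gamma (α + d) / Gamma (α + 1) := by
    have h := integral_Ioi_rpow_mul_one_add_rpow_neg (s := 1 - d) (t := α + d) (by linarith)
      (by linarith)
    rwa [show 1 - d - 1 = -d by ring, show 1 - d + (α + d) = α + 1 by ring, neg_add'] at h
  have hI : ∫ x in Ioi (0 : ℝ), x ^ (-1 - d) * (1 - (1 + x) ^ (-α))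
      = α / d * Gamma (1 - d) * Gamma (α + d) / Gamma (α + 1) := by
    rw [integral_Ioi_rpow_mul_one_sub_one_add_rpow_neg hα.le hd0 hd1, hbeta]
    ring
  refine ⟨hI, fun γ _ ↦ ?_⟩
  have hG1 := (Gamma_pos_of_pos (by linarith : 0 < 1 - d)).ne'
  have hG2 := (Gamma_pos_of_pos (by linarith : 0 < α + d)).ne'
  have hG3 := (Gamma_pos_of_pos (by linarith : 0 < α + 1)).ne'
  rw [hI]
  field_simp
end
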